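/- arXiv:1706.05736 — 2 statements merged into one kernel-verified Lean document; each statement's English description precedes it below -/
import Mathlib

section
/- Let A be an n×n positive-semidefinite matrix over ℝ or ℂ, and let Ω and Ω' be n×k matrices with range(Ω) = range(Ω'). Then the Nyström approximations coincide: AΩ((Ω*AΩ)†)Ω*A = AΩ'((Ω'*AΩ')†)Ω'*A. That is, the Nyström approximation depends on the test matrix Ω only through its range. -/
open Matrix MeasureTheory ProbabilityTheory
open scoped ENNReal NNReal ComplexOrder Classical

namespace PsdSketch

variable {𝕜 : Type*} [RCLike 𝕜]

/-- The four Penrose conditions characterizing the Moore–Penrose pseudoinverse. -/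
def IsMoorePenrose {m k : ℕ} (M : Matrix (Fin m) (Fin k) 𝕜)
    (X : Matrix (Fin k) (Fin m) 𝕜) : Prop :=
  M * X * M = M ∧ X * M * X = X ∧ (M * X)ᴴ = M * X ∧ (X * M)ᴴ = X * M

/-- The Moore–Penrose pseudoinverse `M†` (the unique matrix satisfying the
Penrose conditions). -/
noncomputable def pinv {m k : ℕ} (M : Matrix (Fin m) (Fin k) 𝕜) :
    Matrix (Fin k) (Fin m) 𝕜 :=
  if h : ∃ X, IsMoorePenrose M X then h.choose else 0

/-- The Nyström approximation `Â = A Ω ((Ω* A Ω)†) Ω* A`. -/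
noncomputable def nystrom {n k : ℕ} (A : Matrix (Fin n) (Fin n) 𝕜)
    (Ω : Matrix (Fin n) (Fin k) 𝕜) : Matrix (Fin n) (Fin n) 𝕜 :=
  A * Ω * pinv (Ωᴴ * A * Ω) * Ωᴴ * A

/-- The `i`-th singular value of a square matrix, 0-indexed and listed in weakly
decreasing order (so `sval M 0 = σ₁(M)`), with `sval M i = 0` for `i ≥ n`. -/
noncomputable def sval {n : ℕ} (M : Matrix (Fin n) (Fin n) 𝕜) (i : ℕ) : ℝ :=
  if h : i < n then
    Real.sqrt
      ((Matrix.posSemidef_conjTranspose_mul_self M).1.eigenvalues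
        (Tuple.sort (Matrix.posSemidef_conjTranspose_mul_self M).1.eigenvalues
          (Fin.rev ⟨i, h⟩)))
  else 0

/-- The Schatten `p`-norm: the `ℓ_p` norm of the vector of singular values. -/
noncomputable def schatten {n : ℕ} (p : ℝ≥0∞) (M : Matrix (Fin n) (Fin n) 𝕜) : ℝ :=
  if p = ∞ then sval M 0
  else (∑ i ∈ Finset.range n, sval M i ^ p.toReal) ^ (1 / p.toReal)

/-- `σ_{r+1}^{(p)}(M)`, the optimal rank-`r` approximation error of `M` in the
Schatten `p`-norm: `(Σ_{i > r} σ_i(M)^p)^{1/p}` (for `p = ∞`, `σ_{r+1}(M)`). -/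
noncomputable def tailNorm {n : ℕ} (p : ℝ≥0∞) (M : Matrix (Fin n) (Fin n) 𝕜)
    (r : ℕ) : ℝ :=
  if p = ∞ then sval M r
  else (∑ i ∈ Finset.Ico r n, sval M i ^ p.toReal) ^ (1 / p.toReal)

/-- `B` is a (simultaneous) best rank-`r` approximation of `M` with respect to every
Schatten `p`-norm; this is the defining property of an `r`-truncated SVD `⟦M⟧_r`. -/
def IsBestRankApprox {n : ℕ} (M B : Matrix (Fin n) (Fin n) 𝕜) (r : ℕ) : Prop :=
  B.rank ≤ r ∧
    ∀ p : ℝ≥0∞, 1 ≤ p → ∀ C : Matrix (Fin n) (Fin n) 𝕜, C.rank ≤ r →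
      schatten p (M - B) ≤ schatten p (M - C)

/-- `⟦M⟧_r`: a best rank-`r` approximation of `M` (an `r`-truncated SVD). -/
noncomputable def truncate {n : ℕ} (M : Matrix (Fin n) (Fin n) 𝕜) (r : ℕ) :
    Matrix (Fin n) (Fin n) 𝕜 :=
  if h : ∃ B, IsBestRankApprox M B r then h.choose else 0

/-- The distribution of an `n × k` random matrix with independent standard normal
entries (matrices identified with functions `Fin n → Fin k → ℝ`). -/
noncomputable def gaussianEnsemble (n k : ℕ) : Measure (Fin n → Fin k → ℝ) :=
  Measure.pi fun _ => Measure.pi fun _ => gaussianReal 0 1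

/-! Factor `A = BᴴB`. Then the Nyström approximation is `Bᴴ P B`, where
`P = (BΩ)((BΩ)ᴴ(BΩ))†(BΩ)ᴴ` is the orthogonal projector onto `range (BΩ) = B (range Ω)`.
Projectors `P`, `P'` onto the same subspace absorb each other (`P'P = P`, `PP' = P'`), and
being Hermitian they are then equal: `P = (P'P)ᴴ = PP' = P'`. -/

theorem IsMoorePenrose.unique {m k : ℕ} {M : Matrix (Fin m) (Fin k) 𝕜}
    {X Y : Matrix (Fin k) (Fin m) 𝕜} (hX : IsMoorePenrose M X) (hY : IsMoorePenrose M Y) :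
    X = Y := by
  obtain ⟨hMXM, hXMX, hMX, hXM⟩ := hX
  obtain ⟨hMYM, hYMY, hMY, hYM⟩ := hY
  have hX' : X = X * M * Y :=
    calc X = X * (M * X)ᴴ := by rw [hMX, ← Matrix.mul_assoc, hXMX]
      _ = X * (M * Y * (M * X))ᴴ := by rw [← Matrix.mul_assoc (M * Y), hMYM]
      _ = X * (M * X) * (M * Y) := by rw [conjTranspose_mul, hMX, hMY, ← Matrix.mul_assoc]
      _ = X * M * Y := by rw [← Matrix.mul_assoc X M X, hXMX, Matrix.mul_assoc]
  have hY' : Y = X * M * Y :=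
    calc Y = (Y * M)ᴴ * Y := by rw [hYM, hYMY]
      _ = (Y * M * (X * M))ᴴ * Y := by rw [Matrix.mul_assoc Y M, ← Matrix.mul_assoc M X M, hMXM]
      _ = X * M * (Y * M) * Y := by rw [conjTranspose_mul, hXM, hYM]
      _ = X * M * Y := by rw [Matrix.mul_assoc _ (Y * M), hYMY]
  rw [hX', ← hY']

theorem isMoorePenrose_pinv {m k : ℕ} {M : Matrix (Fin m) (Fin k) 𝕜}
    (h : ∃ X, IsMoorePenrose M X) : IsMoorePenrose M (pinv M) := by
  rw [pinv, dif_pos h]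
  exact h.choose_spec

theorem IsMoorePenrose.pinv_eq {m k : ℕ} {M : Matrix (Fin m) (Fin k) 𝕜}
    {X : Matrix (Fin k) (Fin m) 𝕜} (hX : IsMoorePenrose M X) : pinv M = X :=
  (isMoorePenrose_pinv ⟨X, hX⟩).unique hX

/-- With the convention `0⁻¹ = 0`, every real `x` satisfies `x x⁻¹ x = x` and
`x⁻¹ x x⁻¹ = x⁻¹`, so inverting the eigenvalues gives the pseudoinverse. -/
theorem _root_.Matrix.IsHermitian.isMoorePenrose_cfc_inv {m : ℕ}
    {M : Matrix (Fin m) (Fin m) 𝕜} (hM : M.IsHermitian) :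
    IsMoorePenrose M (cfc (·⁻¹ : ℝ → ℝ) M) := by
  have hM' : IsSelfAdjoint M := hM
  have hmul (f g : ℝ → ℝ) : cfc f M * cfc g M = cfc (fun x => f x * g x) M :=
    (cfc_mul f g M (M.finite_real_spectrum.continuousOn f)
      (M.finite_real_spectrum.continuousOn g)).symm
  have hMX : M * cfc (·⁻¹ : ℝ → ℝ) M = cfc (fun x : ℝ => x * x⁻¹) M := by
    simpa only [cfc_id' ℝ M] using hmul (fun x => x) (·⁻¹)
  have hXM : cfc (·⁻¹ : ℝ → ℝ) M * M = cfc (fun x : ℝ => x⁻¹ * x) M := by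
    simpa only [cfc_id' ℝ M] using hmul (·⁻¹) (fun x => x)
  refine ⟨?_, ?_, ?_, ?_⟩
  · calc M * cfc (·⁻¹ : ℝ → ℝ) M * M = cfc (fun x : ℝ => x * x⁻¹ * x) M := by
          rw [hMX]
          simpa only [cfc_id' ℝ M] using hmul (fun x : ℝ => x * x⁻¹) (fun x => x)
      _ = M := by simp only [mul_inv_mul_cancel]; exact cfc_id' ℝ M
  · calc cfc (·⁻¹ : ℝ → ℝ) M * M * cfc (·⁻¹ : ℝ → ℝ) M
          = cfc (fun x : ℝ => x⁻¹ * x * x⁻¹) M := by rw [hXM, hmul]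
      _ = cfc (·⁻¹ : ℝ → ℝ) M :=
        cfc_congr fun x _ => by simpa using mul_inv_mul_cancel x⁻¹
  · rw [hMX]; exact (IsSelfAdjoint.cfc (R := ℝ)).star_eq
  · rw [hXM]; exact (IsSelfAdjoint.cfc (R := ℝ)).star_eq

theorem _root_.Matrix.IsHermitian.isHermitian_pinv {m : ℕ} {M : Matrix (Fin m) (Fin m) 𝕜}
    (hM : M.IsHermitian) : (pinv M).IsHermitian := by
  rw [hM.isMoorePenrose_cfc_inv.pinv_eq]
  exact IsSelfAdjoint.cfc

theorem exists_mul_eq_of_range_le {R : Type*} [CommSemiring R] {m n p : Type*} [Fintype n]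
    [Fintype p] [DecidableEq p] {C : Matrix m n R} {D : Matrix m p R}
    (h : LinearMap.range D.mulVecLin ≤ LinearMap.range C.mulVecLin) :
    ∃ T : Matrix n p R, C * T = D := by
  choose u hu using fun j => h ⟨Pi.single j 1, rfl⟩
  refine ⟨(Matrix.of u)ᵀ, ?_⟩
  ext i j
  simpa [Matrix.mul_apply, Matrix.mulVec, dotProduct, Pi.single_apply] using congrFun (hu j) i

noncomputable def rangeProj {n k : ℕ} (C : Matrix (Fin n) (Fin k) 𝕜) :
    Matrix (Fin n) (Fin n) 𝕜 :=
  C * pinv (Cᴴ * C) * Cᴴ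

section rangeProj

variable {n k : ℕ}

theorem isHermitian_rangeProj (C : Matrix (Fin n) (Fin k) 𝕜) : (rangeProj C).IsHermitian := by
  simp only [IsHermitian, rangeProj, conjTranspose_mul, conjTranspose_conjTranspose,
    (isHermitian_conjTranspose_mul_self C).isHermitian_pinv.eq, Matrix.mul_assoc]

theorem rangeProj_mul_self (C : Matrix (Fin n) (Fin k) 𝕜) : rangeProj C * C = C := by
  obtain ⟨hGXG, -⟩ := isMoorePenrose_pinv
    ⟨_, (isHermitian_conjTranspose_mul_self C).isMoorePenrose_cfc_inv⟩
  have : C * (pinv (Cᴴ * C) * (Cᴴ * C) - 1) = 0 := by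
    rw [← conjTranspose_mul_self_mul_eq_zero, Matrix.mul_sub, ← Matrix.mul_assoc, hGXG,
      Matrix.mul_one, sub_self]
  rw [Matrix.mul_sub, Matrix.mul_one, sub_eq_zero] at this
  simpa only [rangeProj, Matrix.mul_assoc] using this

theorem rangeProj_mul_of_range_le {p : ℕ} {C : Matrix (Fin n) (Fin k) 𝕜}
    {D : Matrix (Fin n) (Fin p) 𝕜}
    (h : LinearMap.range D.mulVecLin ≤ LinearMap.range C.mulVecLin) :
    rangeProj C * D = D := by
  obtain ⟨T, rfl⟩ := exists_mul_eq_of_range_le h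
  rw [← Matrix.mul_assoc, rangeProj_mul_self]

theorem range_rangeProj_le (C : Matrix (Fin n) (Fin k) 𝕜) :
    LinearMap.range (rangeProj C).mulVecLin ≤ LinearMap.range C.mulVecLin := by
  rw [rangeProj, Matrix.mul_assoc, mulVecLin_mul]
  exact LinearMap.range_comp_le_range _ _

theorem rangeProj_eq_of_range_eq {l : ℕ} {C : Matrix (Fin n) (Fin k) 𝕜}
    {D : Matrix (Fin n) (Fin l) 𝕜}
    (h : LinearMap.range C.mulVecLin = LinearMap.range D.mulVecLin) :
    rangeProj C = rangeProj D := by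
  have hDC := rangeProj_mul_of_range_le ((range_rangeProj_le C).trans h.le)
  have hCD := rangeProj_mul_of_range_le ((range_rangeProj_le D).trans h.ge)
  calc rangeProj C = (rangeProj D * rangeProj C)ᴴ := by rw [hDC, isHermitian_rangeProj]
    _ = rangeProj D := by
      rw [conjTranspose_mul, isHermitian_rangeProj, isHermitian_rangeProj, hCD]

end rangeProj

theorem nystrom_conjTranspose_mul_self {n k : ℕ} (B : Matrix (Fin n) (Fin n) 𝕜)
    (Ω : Matrix (Fin n) (Fin k) 𝕜) : nystrom (Bᴴ * B) Ω = Bᴴ * rangeProj (B * Ω) * B := by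
  simp only [nystrom, rangeProj, conjTranspose_mul, Matrix.mul_assoc]

open scoped MatrixOrder in
theorem _root_.Matrix.PosSemidef.exists_eq_conjTranspose_mul_self {n : ℕ}
    {A : Matrix (Fin n) (Fin n) 𝕜} (hA : A.PosSemidef) :
    ∃ B : Matrix (Fin n) (Fin n) 𝕜, A = Bᴴ * B :=
  CStarAlgebra.nonneg_iff_eq_star_mul_self.mp hA.nonneg

theorem stmt7 {𝕜 : Type*} [RCLike 𝕜] {n k : ℕ} (A : Matrix (Fin n) (Fin n) 𝕜)
    (hA : A.PosSemidef) (Ω Ω' : Matrix (Fin n) (Fin k) 𝕜)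
    (hrange : LinearMap.range Ω.mulVecLin = LinearMap.range Ω'.mulVecLin) :
    nystrom A Ω = nystrom A Ω' := by
  obtain ⟨B, rfl⟩ := hA.exists_eq_conjTranspose_mul_self
  have hBrange : LinearMap.range (B * Ω).mulVecLin = LinearMap.range (B * Ω').mulVecLin := by
    rw [mulVecLin_mul, mulVecLin_mul, LinearMap.range_comp, LinearMap.range_comp, hrange]
  rw [nystrom_conjTranspose_mul_self, nystrom_conjTranspose_mul_self,
    rangeProj_eq_of_range_eq hBrange]

end PsdSketch
end

section
/- Let A be an n×n positive-semidefinite matrix over ℝ or ℂ, let Ω be an n×k matrix, and let Â = AΩ((Ω*AΩ)†)Ω*A be the Nyström approximation. Then ‖A − Â‖₁ = ‖(I − P)A^{1/2}‖₂², where P is the orthogonal projector onto the range of A^{1/2}Ω. In particular, A − Â is positive semidefinite. -/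
open Matrix MeasureTheory ProbabilityTheory
open scoped ENNReal NNReal ComplexOrder Classical

/-!
Let `S = A^{1/2}` and `C = SΩ`, so that `Ω*AΩ = C*C` and `Â = S (C (C*C)† C*) S`. Any
`Y` with `C*C Y C*C = C*C` satisfies `C Y C*C = C`, which makes `C Y C*` the orthogonal
projector onto the range of `C`; hence it is `P` and `A - Â = S(I - P)S = ((I - P)S)*((I - P)S)`
is positive semidefinite. The Schatten 1-norm of a positive semidefinite matrix is its trace,
and `tr(B*B) = ‖B‖₂²`.
-/

open scoped MatrixOrder

lemma mul_self_sub_mul_mul_eq_star_mul {R : Type*} [Ring R] [StarRing R] {s p : R}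
    (hs : IsSelfAdjoint s) (hp : IsSelfAdjoint p) (hp2 : IsIdempotentElem p) :
    s * s - s * p * s = star ((1 - p) * s) * ((1 - p) * s) :=
  calc s * s - s * p * s = s * ((1 - p) * s) := by rw [sub_mul, one_mul, mul_sub, mul_assoc]
    _ = s * (1 - p) * ((1 - p) * s) := by rw [mul_assoc s, ← mul_assoc (1 - p), hp2.one_sub.eq]
    _ = star ((1 - p) * s) * ((1 - p) * s) := by
      rw [star_mul, hs.star_eq, star_sub, star_one, hp.star_eq]

namespace Matrix

variable {𝕜 : Type*} [RCLike 𝕜]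

section Sqrt

variable {ι : Type*} [Fintype ι] [DecidableEq ι] {M : Matrix ι ι 𝕜}

lemma PosSemidef.sqrt_eq_eigenvectorUnitary_mul (hM : M.PosSemidef) :
    CFC.sqrt M = hM.1.eigenvectorUnitary.1 *
      diagonal (RCLike.ofReal ∘ (√·) ∘ hM.1.eigenvalues) *
      (star hM.1.eigenvectorUnitary : Matrix ι ι 𝕜) := by
  rw [CFC.sqrt_eq_cfc, cfc_nnreal_eq_real _ M hM.nonneg, hM.1.cfc_eq, IsHermitian.cfc,
    Unitary.conjStarAlgAut_apply]
  congr 3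
  ext i
  simp [Real.coe_sqrt, hM.eigenvalues_nonneg i]

lemma PosSemidef.trace_sqrt (hM : M.PosSemidef) :
    (CFC.sqrt M).trace = ∑ i, ((√(hM.1.eigenvalues i) : ℝ) : 𝕜) := by
  rw [hM.sqrt_eq_eigenvectorUnitary_mul, trace_mul_cycle, Unitary.coe_star_mul_self, one_mul,
    trace_diagonal]
  rfl

end Sqrt

section Projector

variable {ι κ : Type*} [Fintype ι] [Fintype κ]

lemma mul_eq_self_of_range_le {R : Matrix ι ι 𝕜} {S : Matrix ι κ 𝕜} (hR : IsIdempotentElem R)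
    (h : LinearMap.range S.mulVecLin ≤ LinearMap.range R.mulVecLin) : R * S = S := by
  refine ext_iff_mulVec.mpr fun v => ?_
  obtain ⟨u, hu⟩ := h (LinearMap.mem_range_self S.mulVecLin v)
  simp only [mulVecLin_apply] at hu
  rw [← mulVec_mulVec, ← hu, mulVec_mulVec, hR.eq]

lemma IsHermitian.eq_of_range_mulVecLin_eq {P Q : Matrix ι ι 𝕜} (hP : P.IsHermitian)
    (hP2 : IsIdempotentElem P) (hQ : Q.IsHermitian) (hQ2 : IsIdempotentElem Q)
    (h : LinearMap.range P.mulVecLin = LinearMap.range Q.mulVecLin) : P = Q :=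
  calc P = (Q * P)ᴴ := by rw [mul_eq_self_of_range_le hQ2 h.le, hP.eq]
    _ = P * Q := by rw [conjTranspose_mul, hP.eq, hQ.eq]
    _ = Q := mul_eq_self_of_range_le hP2 h.ge

end Projector

section GeneralizedInverse

variable {ι κ : Type*} [Fintype ι] [Fintype κ] {C : Matrix ι κ 𝕜} {Y : Matrix κ κ 𝕜}

lemma mul_mul_conjTranspose_mul_self_of_gInverse (h : Cᴴ * C * Y * (Cᴴ * C) = Cᴴ * C) :
    C * Y * (Cᴴ * C) = C := by
  set D := C * Y * (Cᴴ * C) - C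
  have hCD : Cᴴ * D = 0 := by
    rw [Matrix.mul_sub, show Cᴴ * (C * Y * (Cᴴ * C)) = Cᴴ * C * Y * (Cᴴ * C) by
      simp only [Matrix.mul_assoc], h, sub_self]
  have hD : Dᴴ = (Cᴴ * C * Yᴴ - 1) * Cᴴ := by
    simp only [D, conjTranspose_sub, conjTranspose_mul, conjTranspose_conjTranspose,
      Matrix.sub_mul, Matrix.one_mul, Matrix.mul_assoc]
  have hDD : Dᴴ * D = 0 := by rw [hD, Matrix.mul_assoc, hCD, Matrix.mul_zero]
  exact sub_eq_zero.mp (conjTranspose_mul_self_eq_zero.mp hDD)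

lemma isIdempotentElem_mul_mul_conjTranspose_of_gInverse
    (h : Cᴴ * C * Y * (Cᴴ * C) = Cᴴ * C) : IsIdempotentElem (C * Y * Cᴴ) :=
  calc C * Y * Cᴴ * (C * Y * Cᴴ) = C * Y * (Cᴴ * C) * Y * Cᴴ := by simp only [Matrix.mul_assoc]
    _ = C * Y * Cᴴ := by rw [mul_mul_conjTranspose_mul_self_of_gInverse h]

lemma isHermitian_mul_mul_conjTranspose_of_gInverse (h : Cᴴ * C * Y * (Cᴴ * C) = Cᴴ * C) :
    (C * Y * Cᴴ).IsHermitian := by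
  have hC : Cᴴ * (C * (Yᴴ * Cᴴ)) = Cᴴ := by
    simpa only [conjTranspose_mul, conjTranspose_conjTranspose, Matrix.mul_assoc] using
      congrArg conjTranspose (mul_mul_conjTranspose_mul_self_of_gInverse h)
  calc (C * Y * Cᴴ)ᴴ = C * Y * (Cᴴ * C) * Yᴴ * Cᴴ := by
        rw [mul_mul_conjTranspose_mul_self_of_gInverse h]
        simp only [conjTranspose_mul, conjTranspose_conjTranspose, Matrix.mul_assoc]
    _ = C * Y * Cᴴ := by simp only [Matrix.mul_assoc, hC]

lemma range_mulVecLin_mul_mul_conjTranspose_of_gInverse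
    (h : Cᴴ * C * Y * (Cᴴ * C) = Cᴴ * C) :
    LinearMap.range (C * Y * Cᴴ).mulVecLin = LinearMap.range C.mulVecLin := by
  apply le_antisymm
  · rw [Matrix.mul_assoc, mulVecLin_mul]
    exact LinearMap.range_comp_le_range _ _
  · conv_lhs => rw [← mul_mul_conjTranspose_mul_self_of_gInverse h]
    rw [← Matrix.mul_assoc, mulVecLin_mul]
    exact LinearMap.range_comp_le_range _ _

end GeneralizedInverse

end Matrix

namespace PsdSketch

variable {𝕜 : Type*} [RCLike 𝕜]

section PseudoInverse

variable {m : ℕ}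

lemma IsMoorePenrose.map {M X : Matrix (Fin m) (Fin m) 𝕜}
    (φ : Matrix (Fin m) (Fin m) 𝕜 ≃⋆ₐ[𝕜] Matrix (Fin m) (Fin m) 𝕜) (h : IsMoorePenrose M X) :
    IsMoorePenrose (φ M) (φ X) := by
  obtain ⟨h1, h2, h3, h4⟩ := h
  refine ⟨?_, ?_, ?_, ?_⟩
  · rw [← map_mul, ← map_mul, h1]
  · rw [← map_mul, ← map_mul, h2]
  · rw [← map_mul, ← star_eq_conjTranspose, ← map_star, star_eq_conjTranspose, h3]
  · rw [← map_mul, ← star_eq_conjTranspose, ← map_star, star_eq_conjTranspose, h4]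

-- `d⁻¹` inverts the nonzero entries of `d` and keeps its zeros, as `0⁻¹ = 0`.
lemma isMoorePenrose_diagonal_ofReal (d : Fin m → ℝ) :
    IsMoorePenrose (diagonal (RCLike.ofReal ∘ d) : Matrix (Fin m) (Fin m) 𝕜)
      (diagonal (RCLike.ofReal ∘ d⁻¹)) := by
  refine ⟨?_, ?_, ?_, ?_⟩ <;>
    simp only [diagonal_mul_diagonal, diagonal_conjTranspose] <;>
    congr 1 <;> ext i <;>
    simp only [Pi.star_apply, Function.comp_apply, Pi.inv_apply, ← RCLike.ofReal_mul,
      RCLike.star_def, RCLike.conj_ofReal]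
  · rw [mul_inv_mul_cancel]
  · simpa only [inv_inv] using congrArg RCLike.ofReal (mul_inv_mul_cancel (d i)⁻¹)

lemma _root_.Matrix.IsHermitian.exists_isMoorePenrose {M : Matrix (Fin m) (Fin m) 𝕜}
    (hM : M.IsHermitian) : ∃ X, IsMoorePenrose M X := by
  have h := (isMoorePenrose_diagonal_ofReal (𝕜 := 𝕜) hM.eigenvalues).map
    (Unitary.conjStarAlgAut 𝕜 _ hM.eigenvectorUnitary)
  rw [← hM.spectral_theorem] at h
  exact ⟨_, h⟩

lemma isMoorePenrose_pinv_of_isHermitian {M : Matrix (Fin m) (Fin m) 𝕜} (hM : M.IsHermitian) :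
    IsMoorePenrose M (pinv M) := by
  rw [pinv, dif_pos hM.exists_isMoorePenrose]
  exact hM.exists_isMoorePenrose.choose_spec

end PseudoInverse

section Nystrom

variable {n k : ℕ}

lemma eq_mul_pinv_mul_conjTranspose {P : Matrix (Fin n) (Fin n) 𝕜} {C : Matrix (Fin n) (Fin k) 𝕜}
    (hP : P.IsHermitian) (hP2 : IsIdempotentElem P)
    (hPC : LinearMap.range P.mulVecLin = LinearMap.range C.mulVecLin) :
    P = C * pinv (Cᴴ * C) * Cᴴ := by
  have hY := (isMoorePenrose_pinv_of_isHermitian (isHermitian_conjTranspose_mul_self C)).1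
  exact hP.eq_of_range_mulVecLin_eq hP2 (isHermitian_mul_mul_conjTranspose_of_gInverse hY)
    (isIdempotentElem_mul_mul_conjTranspose_of_gInverse hY)
    (hPC.trans (range_mulVecLin_mul_mul_conjTranspose_of_gInverse hY).symm)

lemma nystrom_eq_of_mul_self {A S : Matrix (Fin n) (Fin n) 𝕜} (hS : S.IsHermitian)
    (hSS : S * S = A) (Ω : Matrix (Fin n) (Fin k) 𝕜) :
    nystrom A Ω = S * (S * Ω * pinv ((S * Ω)ᴴ * (S * Ω)) * (S * Ω)ᴴ) * S := by
  subst hSS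
  rw [nystrom, conjTranspose_mul, hS.eq]
  simp only [Matrix.mul_assoc]

lemma sub_nystrom_eq {A S P : Matrix (Fin n) (Fin n) 𝕜} {Ω : Matrix (Fin n) (Fin k) 𝕜}
    (hS : S.IsHermitian) (hSS : S * S = A) (hP : P.IsHermitian) (hP2 : IsIdempotentElem P)
    (hPrange : LinearMap.range P.mulVecLin = LinearMap.range (S * Ω).mulVecLin) :
    A - nystrom A Ω = ((1 - P) * S)ᴴ * ((1 - P) * S) := by
  rw [nystrom_eq_of_mul_self hS hSS, ← eq_mul_pinv_mul_conjTranspose hP hP2 hPrange, ← hSS]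
  exact mul_self_sub_mul_mul_eq_star_mul hS hP hP2

end Nystrom

section Schatten

variable {n : ℕ}

lemma sum_range_comp_sval (M : Matrix (Fin n) (Fin n) 𝕜) (g : ℝ → ℝ) :
    ∑ i ∈ Finset.range n, g (sval M i) =
      ∑ j, g √((posSemidef_conjTranspose_mul_self M).1.eigenvalues j) := by
  set ev := (posSemidef_conjTranspose_mul_self M).1.eigenvalues
  rw [← Fin.sum_univ_eq_sum_range]
  have h (j : Fin n) : sval M j = √(ev (Tuple.sort ev (Fin.rev j))) := by
    rw [sval, dif_pos j.isLt]
  simp_rw [h]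
  exact Equiv.sum_comp (Fin.revPerm.trans (Tuple.sort ev)) (fun j => g √(ev j))

lemma schatten_one_of_posSemidef {M : Matrix (Fin n) (Fin n) 𝕜} (hM : M.PosSemidef) :
    schatten 1 M = RCLike.re M.trace := by
  have hMM := posSemidef_conjTranspose_mul_self M
  calc schatten 1 M = ∑ j, √(hMM.1.eigenvalues j) := by
        simpa [schatten] using sum_range_comp_sval M id
    _ = RCLike.re (CFC.sqrt (Mᴴ * M)).trace := by simp [hMM.trace_sqrt]
    _ = RCLike.re M.trace := by rw [hM.1.eq, CFC.sqrt_mul_self M hM.nonneg]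

lemma schatten_two_sq (M : Matrix (Fin n) (Fin n) 𝕜) :
    schatten 2 M ^ 2 = RCLike.re (Mᴴ * M).trace := by
  have hMM := posSemidef_conjTranspose_mul_self M
  have hsum : ∑ i ∈ Finset.range n, sval M i ^ (2 : ℝ) = ∑ j, hMM.1.eigenvalues j := by
    rw [sum_range_comp_sval M (· ^ (2 : ℝ))]
    simp only [Real.rpow_two, Real.sq_sqrt (hMM.eigenvalues_nonneg _)]
  have hnonneg : 0 ≤ ∑ j, hMM.1.eigenvalues j :=
    Finset.sum_nonneg fun j _ => hMM.eigenvalues_nonneg j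
  rw [schatten, if_neg ENNReal.ofNat_ne_top, ENNReal.toReal_ofNat, hsum, ← Real.sqrt_eq_rpow,
    Real.sq_sqrt hnonneg, hMM.1.trace_eq_sum_eigenvalues]
  simp

lemma schatten_one_conjTranspose_mul_self (M : Matrix (Fin n) (Fin n) 𝕜) :
    schatten 1 (Mᴴ * M) = schatten 2 M ^ 2 := by
  rw [schatten_one_of_posSemidef (posSemidef_conjTranspose_mul_self M), schatten_two_sq]

end Schatten

theorem stmt8 {𝕜 : Type*} [RCLike 𝕜] {n k : ℕ} (A : Matrix (Fin n) (Fin n) 𝕜)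
    (hA : A.PosSemidef) (Ω : Matrix (Fin n) (Fin k) 𝕜)
    (P : Matrix (Fin n) (Fin n) 𝕜) (hP : P.IsHermitian) (hP2 : P * P = P)
    (hPrange : LinearMap.range P.mulVecLin = LinearMap.range ((hA.1.eigenvectorUnitary.1 * diagonal (RCLike.ofReal ∘ (√·) ∘ hA.1.eigenvalues) *
      (star hA.1.eigenvectorUnitary : Matrix (Fin n) (Fin n) 𝕜)) * Ω).mulVecLin) :
    schatten 1 (A - nystrom A Ω) = schatten 2 ((1 - P) * (hA.1.eigenvectorUnitary.1 * diagonal (RCLike.ofReal ∘ (√·) ∘ hA.1.eigenvalues) *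
      (star hA.1.eigenvectorUnitary : Matrix (Fin n) (Fin n) 𝕜))) ^ 2 ∧
      (A - nystrom A Ω).PosSemidef := by
  rw [← hA.sqrt_eq_eigenvectorUnitary_mul] at hPrange ⊢
  have hS : (CFC.sqrt A).IsHermitian := (CFC.sqrt_nonneg A).posSemidef.isHermitian
  rw [sub_nystrom_eq hS (CFC.sqrt_mul_sqrt_self A hA.nonneg) hP hP2 hPrange]
  exact ⟨schatten_one_conjTranspose_mul_self _, posSemidef_conjTranspose_mul_self _⟩

end PsdSketch
end
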